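/- arXiv:2301.05483 — 2 statements merged into one kernel-verified Lean document; each statement's English description precedes it below -/
import Mathlib

section
/- For a nonzero formal polynomial P over R_max with lower degree m and degree n, the canonical form P^c defined by P^c_k = inf_{y ∈ R} (P̂(y) - k y) for k ∈ N satisfies: (1) the infimum is attained (or equals -∞) for every k; (2) P^c has the same lower degree and degree as P; (3) P̂^c = P̂; and (4) P^c is the maximum, for the coefficient-wise order, of all formal polynomials Q with Q̂ = P̂. -/
set_option linter.unusedVariables false

noncomputable section

/-- The max-plus (tropical) semifield `R_max = ℝ ∪ {-∞}`, with addition `max`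
and multiplication `+`. -/
abbrev RMax := WithBot ℝ

/-- The polynomial function `P̂(y) = max_{k ≤ n} (P_k + k·y)` of a formal
polynomial over `R_max` of degree at most `n`. -/
def tPhat (P : ℕ → RMax) (n : ℕ) (y : RMax) : RMax :=
  (Finset.range (n + 1)).sup fun k => P k + k • y

/-!
For real `y`, `P̂(y)` is the maximum of the affine functions `y ↦ P_j + j y` over the finite
support of `P`: it is continuous, and equals its top piece `P_n + n y` near `+∞` and its bottom
piece `P_m + m y` near `-∞`. Hence `P̂(y) - k y` tends to `-∞` when `k > n` or `k < m`, while for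
`m ≤ k ≤ n` it is monotone on both tails and so attains its infimum on a compact interval.
The inequalities `Q_k + k y ≤ Q̂(y)` show that every `Q` with `Q̂ = P̂` lies below `P^c`, and
`P^c_k + k y ≤ P̂(y)` is the lower-bound property of the infimum; together they give `P̂^c = P̂`
on `ℝ`. At `y = -∞` both sides are constant coefficients, and `P^c_0 = P_0` because `P̂(y) = P_0`
for `y` near `-∞` when `m = 0`.
-/

open Filter Finset

theorem Continuous.exists_forall_le_of_antitoneOn_of_monotoneOn {α β : Type*} [LinearOrder α]
    [TopologicalSpace α] [CompactIccSpace α] [LinearOrder β] [TopologicalSpace β]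
    [ClosedIicTopology β] {f : α → β} (hf : Continuous f) {a b : α}
    (ha : AntitoneOn f (Set.Iic a)) (hb : MonotoneOn f (Set.Ici b)) :
    ∃ x, ∀ y, f x ≤ f y := by
  have haK : a ∈ Set.Icc (min a b) (max a b) := ⟨min_le_left a b, le_max_left a b⟩
  have hbK : b ∈ Set.Icc (min a b) (max a b) := ⟨min_le_right a b, le_max_right a b⟩
  obtain ⟨x, -, hx⟩ := isCompact_Icc.exists_isMinOn ⟨a, haK⟩ hf.continuousOn
  refine ⟨x, fun y => ?_⟩
  rcases lt_or_ge y (min a b) with hya | hya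
  · have hy : y ≤ a := (hya.trans_le (min_le_left a b)).le
    exact (hx haK).trans (ha hy le_rfl hy)
  rcases le_or_gt y (max a b) with hyb | hyb
  · exact hx ⟨hya, hyb⟩
  · have hy : b ≤ y := ((le_max_right a b).trans_lt hyb).le
    exact (hx hbK).trans (hb le_rfl hy hy)

theorem IsGLB.eq_bot_of_tendsto_atBot {α ι : Type*} [Preorder α] [NoBotOrder α] {g : ι → α}
    {l : Filter ι} [l.NeBot] (hg : Tendsto g l atBot) {b : WithBot α}
    (hb : IsGLB (Set.range fun i => (g i : WithBot α)) b) : b = ⊥ := by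
  induction b with
  | bot => rfl
  | coe r =>
    obtain ⟨i, hi⟩ := (hg.eventually_lt_atBot r).exists
    exact absurd (WithBot.coe_le_coe.1 (hb.1 ⟨i, rfl⟩)) hi.not_ge

theorem IsGLB.eq_coe_of_forall_le {α ι : Type*} [PartialOrder α] {g : ι → α} {i₀ : ι}
    {b : WithBot α} (hb : IsGLB (Set.range fun i => (g i : WithBot α)) b)
    (h : ∀ i, g i₀ ≤ g i) : b = g i₀ :=
  hb.unique (IsLeast.isGLB ⟨⟨i₀, rfl⟩, Set.forall_mem_range.2 fun i => WithBot.coe_le_coe.2 (h i)⟩)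

theorem WithBot.add_coe_le_iff_le_add_coe_neg {α : Type*} [AddCommGroup α] [PartialOrder α]
    [IsOrderedAddMonoid α] {x z : WithBot α} {c : α} : x + c ≤ z ↔ x ≤ z + ↑(-c) := by
  have hz : z = z + ↑(-c) + c := by
    rw [add_assoc, ← WithBot.coe_add, neg_add_cancel, WithBot.coe_zero, add_zero]
  conv_lhs => rw [hz]
  exact WithBot.add_le_add_iff_right WithBot.coe_ne_bot

def maxAffine (S : Finset ℕ) (hS : S.Nonempty) (a : ℕ → ℝ) (y : ℝ) : ℝ :=
  S.sup' hS fun j => a j + j * y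

section MaxAffine

variable {S : Finset ℕ} (hS : S.Nonempty) (a : ℕ → ℝ)

@[fun_prop]
theorem continuous_maxAffine : Continuous (maxAffine S hS a) :=
  Continuous.finset_sup'_apply hS fun j _ => by fun_prop

theorem maxAffine_eventually_eq_atTop {n : ℕ} (hn : n ∈ S) (hmax : ∀ j ∈ S, j ≤ n) :
    ∀ᶠ y in atTop, maxAffine S hS a y = a n + n * y := by
  have hdom : ∀ᶠ y in atTop, ∀ j ∈ S, a j + j * y ≤ a n + n * y := by
    refine (eventually_all_finset S).2 fun j hj => ?_
    rcases (hmax j hj).lt_or_eq with hjn | rfl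
    · have hslope : (0 : ℝ) < n - j := sub_pos.2 (by exact_mod_cast hjn)
      filter_upwards [(tendsto_id.const_mul_atTop hslope).eventually_ge_atTop (a j - a n)]
        with y hy
      simp only [id] at hy
      linarith
    · exact Eventually.of_forall fun y => le_rfl
  filter_upwards [hdom] with y hy
  exact le_antisymm (sup'_le hS _ hy) (le_sup' (fun j => a j + j * y) hn)

theorem maxAffine_eventually_eq_atBot {m : ℕ} (hm : m ∈ S) (hmin : ∀ j ∈ S, m ≤ j) :
    ∀ᶠ y in atBot, maxAffine S hS a y = a m + m * y := by
  have hdom : ∀ᶠ y in atBot, ∀ j ∈ S, a j + j * y ≤ a m + m * y := by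
    refine (eventually_all_finset S).2 fun j hj => ?_
    rcases (hmin j hj).lt_or_eq with hmj | rfl
    · have hslope : (0 : ℝ) < j - m := sub_pos.2 (by exact_mod_cast hmj)
      filter_upwards [(tendsto_id.const_mul_atBot hslope).eventually_le_atBot (a m - a j)]
        with y hy
      simp only [id] at hy
      linarith
    · exact Eventually.of_forall fun y => le_rfl
  filter_upwards [hdom] with y hy
  exact le_antisymm (sup'_le hS _ hy) (le_sup' (fun j => a j + j * y) hm)

theorem tendsto_maxAffine_sub_atTop {n k : ℕ} (hn : n ∈ S) (hmax : ∀ j ∈ S, j ≤ n)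
    (hnk : n < k) : Tendsto (fun y => maxAffine S hS a y - k * y) atTop atBot := by
  have hslope : (n - k : ℝ) < 0 := sub_neg.2 (by exact_mod_cast hnk)
  refine (tendsto_atBot_add_const_left _ (a n)
    (tendsto_id.const_mul_atTop_of_neg hslope)).congr' ?_
  filter_upwards [maxAffine_eventually_eq_atTop hS a hn hmax] with y hy
  rw [hy, id]
  ring

theorem tendsto_maxAffine_sub_atBot {m k : ℕ} (hm : m ∈ S) (hmin : ∀ j ∈ S, m ≤ j)
    (hkm : k < m) : Tendsto (fun y => maxAffine S hS a y - k * y) atBot atBot := by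
  have hslope : (0 : ℝ) < m - k := sub_pos.2 (by exact_mod_cast hkm)
  refine (tendsto_atBot_add_const_left _ (a m)
    (tendsto_id.const_mul_atBot hslope)).congr' ?_
  filter_upwards [maxAffine_eventually_eq_atBot hS a hm hmin] with y hy
  rw [hy, id]
  ring

theorem exists_forall_le_maxAffine_sub {m n k : ℕ} (hm : m ∈ S) (hmin : ∀ j ∈ S, m ≤ j)
    (hn : n ∈ S) (hmax : ∀ j ∈ S, j ≤ n) (hmk : m ≤ k) (hkn : k ≤ n) :
    ∃ y₀, ∀ y, maxAffine S hS a y₀ - k * y₀ ≤ maxAffine S hS a y - k * y := by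
  obtain ⟨c, hc⟩ := (maxAffine_eventually_eq_atBot hS a hm hmin).exists_forall_of_atBot
  obtain ⟨b, hb⟩ := (maxAffine_eventually_eq_atTop hS a hn hmax).exists_forall_of_atTop
  have hmk' : (m : ℝ) ≤ k := by exact_mod_cast hmk
  have hkn' : (k : ℝ) ≤ n := by exact_mod_cast hkn
  refine Continuous.exists_forall_le_of_antitoneOn_of_monotoneOn
    (f := fun y => maxAffine S hS a y - k * y) (by fun_prop) (a := c) (b := b) ?_ ?_
  · intro x hx y hy hxy
    beta_reduce
    rw [hc x hx, hc y hy]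
    nlinarith
  · intro x hx y hy hxy
    beta_reduce
    rw [hb x hx, hb y hy]
    nlinarith

end MaxAffine

theorem nsmul_coe_eq_coe_mul (k : ℕ) (y : ℝ) : k • (y : RMax) = ↑(k * y) := by
  rw [← WithBot.coe_nsmul, nsmul_eq_mul]

theorem coeff_add_nsmul_le_tPhat (Q : ℕ → RMax) {k N : ℕ} (hk : k ≤ N) (y : RMax) :
    Q k + k • y ≤ tPhat Q N y :=
  le_sup (f := fun j => Q j + j • y) (mem_range_succ_iff.2 hk)

theorem tPhat_bot (Q : ℕ → RMax) (n : ℕ) : tPhat Q n ⊥ = Q 0 := by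
  refine le_antisymm (Finset.sup_le fun k _ => ?_) ?_
  · cases k with
    | zero => simp
    | succ k => simp [succ_nsmul]
  · simpa using coeff_add_nsmul_le_tPhat Q (Nat.zero_le n) ⊥

theorem exists_tPhat_eq_maxAffine {P : ℕ → RMax} {m n : ℕ} (hmn : m ≤ n) (hPm : P m ≠ ⊥)
    (hPn : P n ≠ ⊥) (hlow : ∀ k < m, P k = ⊥) :
    ∃ (S : Finset ℕ) (hS : S.Nonempty) (a : ℕ → ℝ), m ∈ S ∧ (∀ j ∈ S, m ≤ j) ∧ n ∈ S ∧
      (∀ j ∈ S, j ≤ n) ∧ P m = a m ∧ ∀ y : ℝ, tPhat P n y = maxAffine S hS a y := by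
  classical
  set S := (range (n + 1)).filter (P · ≠ ⊥)
  have hnS : n ∈ S := mem_filter.2 ⟨self_mem_range_succ n, hPn⟩
  have hcoe : ∀ j, P j ≠ ⊥ → P j = ((P j).unbotD 0 : ℝ) := fun j hj => by
    obtain ⟨r, hr⟩ := WithBot.ne_bot_iff_exists.1 hj
    rw [← hr, WithBot.unbotD_coe]
  have hS : S.Nonempty := ⟨n, hnS⟩
  refine ⟨S, hS, fun j => (P j).unbotD 0, mem_filter.2 ⟨mem_range_succ_iff.2 hmn, hPm⟩,
    fun j hj => not_lt.1 fun h => (mem_filter.1 hj).2 (hlow j h), hnS,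
    fun j hj => mem_range_succ_iff.1 (mem_filter.1 hj).1, hcoe m hPm, fun y => ?_⟩
  have hterm : ∀ j ∈ S, P j + j • (y : RMax) = ↑((P j).unbotD 0 + j * y) := fun j hj => by
    rw [WithBot.coe_add, ← hcoe j (mem_filter.1 hj).2, nsmul_coe_eq_coe_mul]
  unfold tPhat maxAffine
  rw [coe_sup']
  refine le_antisymm (Finset.sup_le fun k hk => ?_) (Finset.sup_le fun k hk => ?_)
  · by_cases hPk : P k = ⊥
    · simp [hPk]
    · exact le_sup_of_le (mem_filter.2 ⟨hk, hPk⟩) (hterm k (mem_filter.2 ⟨hk, hPk⟩)).le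
  · exact le_sup_of_le (mem_filter.1 hk).1 (hterm k hk).ge

section Canonical

variable {P : ℕ → RMax} {n : ℕ} {Pc : ℕ → RMax}
  (hPc : ∀ k : ℕ,
    IsGLB (Set.range fun y : ℝ => tPhat P n (y : RMax) + ((-(k * y) : ℝ) : RMax)) (Pc k))
include hPc

theorem le_canonical_of_tPhat_eq {Q : ℕ → RMax} {N k : ℕ}
    (hQ : ∀ y : ℝ, tPhat Q N y = tPhat P n y) (hk : k ≤ N) : Q k ≤ Pc k := by
  refine (hPc k).2 ?_
  rintro _ ⟨y, rfl⟩
  dsimp only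
  rw [← hQ, ← WithBot.add_coe_le_iff_le_add_coe_neg, ← nsmul_coe_eq_coe_mul]
  exact coeff_add_nsmul_le_tPhat Q hk y

theorem tPhat_canonical_coe_le (y : ℝ) : tPhat Pc n y ≤ tPhat P n y :=
  Finset.sup_le fun k _ => by
    rw [nsmul_coe_eq_coe_mul, WithBot.add_coe_le_iff_le_add_coe_neg]
    exact (hPc k).1 ⟨y, rfl⟩

theorem tPhat_canonical_eq (h₀ : Pc 0 ≤ P 0) (y : RMax) : tPhat Pc n y = tPhat P n y := by
  refine le_antisymm ?_ (Finset.sup_mono_fun fun k hk => add_le_add_left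
    (le_canonical_of_tPhat_eq hPc (fun _ => rfl) (mem_range_succ_iff.1 hk)) _)
  induction y using WithBot.recBotCoe with
  | bot => rwa [tPhat_bot, tPhat_bot]
  | coe y => exact tPhat_canonical_coe_le hPc y

end Canonical

theorem rmax_canonical_form_general (P : ℕ → RMax) (m n : ℕ) (hmn : m ≤ n)
    (hPn : P n ≠ ⊥) (hPm : P m ≠ ⊥)
    (hlow : ∀ k, k < m → P k = ⊥)
    (Pc : ℕ → RMax)
    (hPc : ∀ k : ℕ,
      IsGLB (Set.range fun y : ℝ => tPhat P n (y : RMax) + ((-(k * y) : ℝ) : RMax)) (Pc k)) :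
    (∀ k : ℕ, Pc k = ⊥ ∨
      ∃ y : ℝ, tPhat P n (y : RMax) + ((-(k * y) : ℝ) : RMax) = Pc k) ∧
    (Pc n ≠ ⊥ ∧ (∀ k, n < k → Pc k = ⊥) ∧ Pc m ≠ ⊥ ∧ (∀ k, k < m → Pc k = ⊥)) ∧
    (∀ y : RMax, tPhat Pc n y = tPhat P n y) ∧
    (∀ (Q : ℕ → RMax) (N : ℕ), (∀ k, N < k → Q k = ⊥) →
      (∀ y : RMax, tPhat Q N y = tPhat P n y) → ∀ k, Q k ≤ Pc k) := by
  obtain ⟨S, hS, a, hmS, hmin, hnS, hmax, hPma, hhat⟩ :=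
    exists_tPhat_eq_maxAffine hmn hPm hPn hlow
  have hval : ∀ (k : ℕ) (y : ℝ),
      tPhat P n y + ((-(k * y) : ℝ) : RMax) = ↑(maxAffine S hS a y - k * y) := fun k y => by
    rw [hhat, ← WithBot.coe_add, sub_eq_add_neg]
  have hglb : ∀ k : ℕ,
      IsGLB (Set.range fun y => ((maxAffine S hS a y - k * y : ℝ) : RMax)) (Pc k) :=
    fun k => by simpa only [hval] using hPc k
  have hlt : ∀ k, k < m → Pc k = ⊥ := fun k hk =>
    (hglb k).eq_bot_of_tendsto_atBot (tendsto_maxAffine_sub_atBot hS a hmS hmin hk)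
  have hgt : ∀ k, n < k → Pc k = ⊥ := fun k hk =>
    (hglb k).eq_bot_of_tendsto_atBot (tendsto_maxAffine_sub_atTop hS a hnS hmax hk)
  have hattained : ∀ k, m ≤ k → k ≤ n → ∃ y, ↑(maxAffine S hS a y - k * y) = Pc k :=
    fun k hmk hkn => (exists_forall_le_maxAffine_sub hS a hmS hmin hnS hmax hmk hkn).imp
      fun _ hy => ((hglb k).eq_coe_of_forall_le hy).symm
  have hPcm : Pc m ≤ P m := by
    obtain ⟨y, hy⟩ := (maxAffine_eventually_eq_atBot hS a hmS hmin).exists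
    calc Pc m ≤ ↑(maxAffine S hS a y - m * y) := (hglb m).1 ⟨y, rfl⟩
      _ = P m := by rw [hy, hPma, add_sub_cancel_right]
  have hne : ∀ k, m ≤ k → k ≤ n → Pc k ≠ ⊥ := fun k hmk hkn =>
    (hattained k hmk hkn).elim fun _ hy => hy ▸ WithBot.coe_ne_bot
  refine ⟨fun k => ?_, ⟨hne n hmn le_rfl, hgt, hne m le_rfl hmn, hlt⟩, tPhat_canonical_eq hPc ?_,
    fun Q N hQ hQP k => ?_⟩
  · rcases lt_or_ge k m with hkm | hmk
    · exact .inl (hlt k hkm)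
    rcases le_or_gt k n with hkn | hnk
    · simpa only [hval] using .inr (hattained k hmk hkn)
    · exact .inl (hgt k hnk)
  · rcases Nat.eq_zero_or_pos m with rfl | hm
    · exact hPcm
    · exact (hlt 0 hm).symm ▸ bot_le
  · rcases le_or_gt k N with hkN | hNk
    · exact le_canonical_of_tPhat_eq hPc (fun y => hQP y) hkN
    · exact (hQ k hNk).symm ▸ bot_le

/-- Canonical form of a polynomial function over `R_max`: for a nonzero formal
polynomial `P` of lower degree `m` and degree `n`, the canonical form `P^c`,
defined by `P^c_k = inf_{y ∈ ℝ} (P̂(y) - k·y)` (here characterized as the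
greatest lower bound), satisfies:
(1) for each `k` the infimum is attained or equals `⊥`;
(2) `P^c` has the same degree `n` and lower degree `m` as `P`;
(3) `P^c` has the same polynomial function as `P`;
(4) `P^c` is the maximum, for the coefficientwise order, of all formal
    polynomials with the same polynomial function as `P`. -/
theorem rmax_canonical_form (P : ℕ → RMax) (m n : ℕ) (hmn : m ≤ n)
    (hPn : P n ≠ ⊥) (hPm : P m ≠ ⊥)
    (hlow : ∀ k, k < m → P k = ⊥) (hhigh : ∀ k, n < k → P k = ⊥)
    (Pc : ℕ → RMax)
    (hPc : ∀ k : ℕ,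
      IsGLB (Set.range fun y : ℝ => tPhat P n (y : RMax) + ((-(k * y) : ℝ) : RMax)) (Pc k)) :
    (∀ k : ℕ, Pc k = ⊥ ∨
      ∃ y : ℝ, tPhat P n (y : RMax) + ((-(k * y) : ℝ) : RMax) = Pc k) ∧
    (Pc n ≠ ⊥ ∧ (∀ k, n < k → Pc k = ⊥) ∧ Pc m ≠ ⊥ ∧ (∀ k, k < m → Pc k = ⊥)) ∧
    (∀ y : RMax, tPhat Pc n y = tPhat P n y) ∧
    (∀ (Q : ℕ → RMax) (N : ℕ), (∀ k, N < k → Q k = ⊥) →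
      (∀ y : RMax, tPhat Q N y = tPhat P n y) → ∀ k, Q k ≤ Pc k) :=
  rmax_canonical_form_general P m n hmn hPn hPm hlow Pc hPc
end
end

section
/- Under the hypotheses of the factorization theorem (P ∈ S_max^∨[Y], |P| factored, r_i defined by r_i ⊙ P_{n-i+1} = ⊖ P_{n-i}), if y ∈ S_max^∨ is distinct from all r_1,...,r_n, or |y| < |r_n|, then P̂(y) is not a balanced element of S_max. -/
set_option linter.unusedVariables false

/-- The symmetrized tropical semiring `S_max(Γ)` over an ordered abelian group `Γ`:
its elements are the zero, the positive elements, the negative elements and the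
(nonzero) balanced elements, each carrying a modulus in `Γ`. -/
inductive SMax (Γ : Type) : Type
  | zero : SMax Γ
  | pos : Γ → SMax Γ
  | neg : Γ → SMax Γ
  | bal : Γ → SMax Γ
  deriving DecidableEq

namespace SMax

variable {Γ : Type} [AddCommGroup Γ] [LinearOrder Γ] [IsOrderedAddMonoid Γ]

/-- The modulus (absolute value) map, with values in the tropical semifield `T_max = Γ ∪ {⊥}`. -/
def mod : SMax Γ → WithBot Γ
  | .zero => ⊥
  | .pos a => (a : WithBot Γ)
  | .neg a => (a : WithBot Γ)
  | .bal a => (a : WithBot Γ)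

/-- The negation map `⊖`. -/
def sneg : SMax Γ → SMax Γ
  | .zero => .zero
  | .pos a => .neg a
  | .neg a => .pos a
  | .bal a => .bal a

/-- Addition `⊕` of `S_max`. -/
def add : SMax Γ → SMax Γ → SMax Γ
  | .zero, y => y
  | x, .zero => x
  | .pos a, .pos b => .pos (max a b)
  | .neg a, .neg b => .neg (max a b)
  | .pos a, .neg b => if b < a then .pos a else if a < b then .neg b else .bal a
  | .neg a, .pos b => if b < a then .neg a else if a < b then .pos b else .bal a
  | .bal a, .pos b => if a < b then .pos b else .bal a
  | .bal a, .neg b => if a < b then .neg b else .bal a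
  | .pos a, .bal b => if b < a then .pos a else .bal b
  | .neg a, .bal b => if b < a then .neg a else .bal b
  | .bal a, .bal b => .bal (max a b)

/-- Multiplication `⊙` of `S_max`. -/
def mul : SMax Γ → SMax Γ → SMax Γ
  | .zero, _ => .zero
  | _, .zero => .zero
  | .pos a, .pos b => .pos (a + b)
  | .pos a, .neg b => .neg (a + b)
  | .pos a, .bal b => .bal (a + b)
  | .neg a, .pos b => .neg (a + b)
  | .neg a, .neg b => .pos (a + b)
  | .neg a, .bal b => .bal (a + b)
  | .bal a, .pos b => .bal (a + b)
  | .bal a, .neg b => .bal (a + b)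
  | .bal a, .bal b => .bal (a + b)

/-- The multiplicative unit `𝟙 = (0, ⊥)`. -/
def one : SMax Γ := .pos 0

/-- Signed elements (`S_max^∨`): positive, negative, or zero. -/
def isSigned : SMax Γ → Prop
  | .bal _ => False
  | _ => True

/-- Balanced elements (`S_max^∘`), including zero. -/
def isBalanced : SMax Γ → Prop
  | .zero => True
  | .bal _ => True
  | _ => False

/-- The balance relation `x ∇ y`, i.e. `x ⊖ y` is balanced. -/
def nabla (x y : SMax Γ) : Prop := isBalanced (add x (sneg y))

/-- Powers in `S_max`. -/
def spow (x : SMax Γ) : ℕ → SMax Γ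
  | 0 => one
  | k + 1 => mul x (spow x k)

/-- Sum of a list of elements of `S_max`. -/
def lsum : List (SMax Γ) → SMax Γ := List.foldr add .zero

/-- The polynomial function `P̂(y) = ⊕_{k ≤ n} P_k ⊙ y^{⊙ k}` of a formal
polynomial of degree at most `n`. -/
def phat (P : ℕ → SMax Γ) (n : ℕ) (y : SMax Γ) : SMax Γ :=
  lsum ((List.range (n + 1)).map fun k => mul (P k) (spow y k))

/-- The product `(y ⊖ r₁) ⊙ ⋯ ⊙ (y ⊖ r_n)` over a list of roots. -/
def evalFactors (y : SMax Γ) : List (SMax Γ) → SMax Γ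
  | [] => one
  | r :: rs => mul (add y (sneg r)) (evalFactors y rs)

/-- The formal linear polynomial `Y ⊖ r`. -/
def linFactor (r : SMax Γ) : ℕ → SMax Γ :=
  fun k => if k = 0 then sneg r else if k = 1 then one else .zero

/-- Constant formal polynomial. -/
def constPoly (c : SMax Γ) : ℕ → SMax Γ := fun k => if k = 0 then c else .zero

/-- Cauchy product of formal polynomials over `S_max`. -/
def polyMul (P Q : ℕ → SMax Γ) : ℕ → SMax Γ :=
  fun k => lsum ((List.range (k + 1)).map fun i => mul (P i) (Q (k - i)))

/-- The formal polynomial `c ⊙ (Y ⊖ r₁) ⋯ (Y ⊖ r_n)`. -/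
def prodLin (c : SMax Γ) : List (SMax Γ) → ℕ → SMax Γ
  | [] => constPoly c
  | r :: rs => polyMul (linFactor r) (prodLin c rs)

/-- Polynomial function of a tropical polynomial over `T_max = WithBot Γ`. -/
def tphat (Q : ℕ → WithBot Γ) (n : ℕ) (x : WithBot Γ) : WithBot Γ :=
  (Finset.range (n + 1)).sup fun k => Q k + k • x

/-- `a` is a root of the (finitely supported) formal polynomial `P`, i.e. `P̂(a) ∇ 0`. -/
def IsRoot (P : ℕ → SMax Γ) (a : SMax Γ) : Prop :=
  ∃ N, (∀ k, N < k → P k = .zero) ∧ nabla (phat P N a) .zero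

/-- The coefficientwise balance relation `λ P ∇ (Y ⊖ a) Q`. -/
def balFactor (a lam : SMax Γ) (P Q : ℕ → SMax Γ) : Prop :=
  (∀ k, 1 ≤ k → nabla (mul lam (P k)) (add (Q (k - 1)) (mul (sneg a) (Q k)))) ∧
  nabla (mul lam (P 0)) (mul (sneg a) (Q 0))

/-- The Baker–Lorscheid multiplicity of `a` as a root of `P` is at least `m`:
there is a chain of length `m` of divisions by `(Y ⊖ a)` up to balance, with
tangible multipliers and signed quotients. -/
def MultGe (a : SMax Γ) : ℕ → (ℕ → SMax Γ) → Prop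
  | 0, _ => True
  | m + 1, P => IsRoot P a ∧ ∃ (lam : SMax Γ) (Q : ℕ → SMax Γ),
      isSigned lam ∧ lam ≠ .zero ∧ (∀ k, isSigned (Q k)) ∧
      (∃ N, ∀ k, N < k → Q k = .zero) ∧ balFactor a lam P Q ∧ MultGe a m Q

/-- The Baker–Lorscheid multiplicity of `a` as a root of `P` equals `m`. -/
def MultEq (a : SMax Γ) (P : ℕ → SMax Γ) (m : ℕ) : Prop :=
  MultGe a m P ∧ ¬ MultGe a (m + 1) P

/-- The number of sign changes in the (nonzero) coefficients of a formal polynomial. -/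
noncomputable def signChanges (Q : ℕ → SMax Γ) : ℕ :=
  Set.ncard {i : ℕ | ∃ k, 1 ≤ k ∧ Q i ≠ .zero ∧ Q i = sneg (Q (i + k)) ∧
    ∀ j, i < j → j < i + k → Q j = .zero}

end SMax

/-!
Write `t_k = P_k ⊙ y^{⊙ k}` for the monomials of `P̂(y)` and `ρ_k = r_{n-k}`, so that
`ρ_k ⊙ P_{k+1} = ⊖ P_k`. Taking moduli gives `|ρ_k| + |t_{k+1}| = |y| + |t_k|`: the monomials
decrease in modulus from `k` to `k + 1` when `|y| < |ρ_k|`, increase when `|y| > |ρ_k|`, and when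
`|y| = |ρ_k|` with `y ≠ ρ_k` both signed, `y = ⊖ ρ_k` and `t_{k+1} = t_k`. Concavity of `|P|`
makes `|ρ_k|` nondecreasing, so at the first index `K` with `|y| < |ρ_K|` every monomial either
equals `t_K` or has smaller modulus. As `|a ⊕ b| = max |a| |b|`, the sum is then the signed
nonzero element `t_K`. If `|y| < |r_n|`, then `K = 0` and `P̂(y) = P_0`.
-/

theorem exists_threshold_of_monotoneOn {β : Type*} [LinearOrder β] {f : ℕ → β} {m n : ℕ}
    (hmn : m ≤ n) (hf : MonotoneOn f (Set.Ico m n)) (c : β) :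
    ∃ K, m ≤ K ∧ K ≤ n ∧ (∀ k, m ≤ k → k < K → f k ≤ c) ∧
      ∀ k, K ≤ k → k < n → c < f k := by
  classical
  have hex : ∃ K, m ≤ K ∧ K ≤ n ∧ (K < n → c < f K) :=
    ⟨n, hmn, le_rfl, fun h => absurd h (lt_irrefl n)⟩
  obtain ⟨hmK, hKn, hK⟩ := Nat.find_spec hex
  refine ⟨Nat.find hex, hmK, hKn, fun k hmk hkK => ?_, fun k hKk hkn => ?_⟩
  · have hk := Nat.find_min hex hkK
    simp only [not_and, Classical.not_imp, not_lt] at hk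
    exact (hk hmk (by omega)).2
  · exact (hK (by omega)).trans_le (hf ⟨hmK, by omega⟩ ⟨by omega, hkn⟩ hKk)

namespace SMax

variable {Γ : Type}

theorem mod_eq_bot_iff {x : SMax Γ} : mod x = ⊥ ↔ x = zero := by
  cases x <;> simp [mod]

theorem mod_sneg (x : SMax Γ) : mod (sneg x) = mod x := by
  cases x <;> rfl

theorem sneg_sneg (x : SMax Γ) : sneg (sneg x) = x := by
  cases x <;> rfl

theorem eq_sneg_of_mod_eq {x y : SMax Γ} (hx : isSigned x) (hy : isSigned y)
    (hm : mod x = mod y) (hne : x ≠ y) : x = sneg y := by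
  cases x <;> cases y <;> simp_all [mod, sneg, isSigned]

theorem not_isBalanced_of_isSigned {x : SMax Γ} (hx : isSigned x) (h0 : x ≠ zero) :
    ¬ isBalanced x := by
  cases x <;> simp_all [isSigned, isBalanced]

section Order

variable [LinearOrder Γ]

theorem mod_add (x y : SMax Γ) : mod (add x y) = max (mod x) (mod y) := by
  cases x <;> cases y <;> simp only [add] <;> (try split_ifs) <;>
    simp_all [mod, le_of_lt]

theorem add_self (x : SMax Γ) : add x x = x := by
  cases x <;> simp [add]

theorem add_comm (x y : SMax Γ) : add x y = add y x := by
  cases x <;> cases y <;> simp only [add] <;> grind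

theorem add_eq_left_of_mod_lt {x y : SMax Γ} (h : mod y < mod x) : add x y = x := by
  cases x <;> cases y <;> simp_all [add, mod, le_of_lt]

/-- `x` is absorbed by `s` under `⊕`. -/
def Dominated (x s : SMax Γ) : Prop := x = s ∨ mod x < mod s

theorem Dominated.refl (x : SMax Γ) : Dominated x x := Or.inl rfl

theorem Dominated.trans {x y s : SMax Γ} (hxy : Dominated x y) (hys : Dominated y s) :
    Dominated x s := by
  rcases hxy with rfl | hxy
  · exact hys
  rcases hys with rfl | hys
  · exact Or.inr hxy
  · exact Or.inr (hxy.trans hys)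

theorem zero_dominated (s : SMax Γ) : Dominated zero s := by
  rcases eq_or_ne s zero with rfl | hs
  · exact Dominated.refl _
  · exact Or.inr (bot_lt_iff_ne_bot.2 (mod_eq_bot_iff.not.2 hs))

theorem Dominated.add {x y s : SMax Γ} (hx : Dominated x s) (hy : Dominated y s) :
    Dominated (add x y) s := by
  rcases hx with rfl | hx <;> rcases hy with rfl | hy
  · exact Or.inl (add_self _)
  · exact Or.inl (add_eq_left_of_mod_lt hy)
  · exact Or.inl (by rw [add_comm, add_eq_left_of_mod_lt hx])
  · exact Or.inr (by rw [mod_add]; exact max_lt hx hy)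

theorem mod_le_mod_lsum {l : List (SMax Γ)} {x : SMax Γ} (hx : x ∈ l) :
    mod x ≤ mod (lsum l) := by
  induction l with
  | nil => simp at hx
  | cons a t ih =>
      simp only [lsum, List.foldr_cons, mod_add] at ih ⊢
      rcases List.mem_cons.1 hx with rfl | hx
      · exact le_max_left _ _
      · exact (ih hx).trans (le_max_right _ _)

theorem dominated_lsum {l : List (SMax Γ)} {s : SMax Γ} (h : ∀ x ∈ l, Dominated x s) :
    Dominated (lsum l) s := by
  induction l with
  | nil => exact zero_dominated s
  | cons a t ih =>
      exact (h a List.mem_cons_self).add (ih fun x hx => h x (List.mem_cons_of_mem _ hx))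

theorem lsum_eq_of_dominated {l : List (SMax Γ)} {s : SMax Γ} (hs : s ∈ l)
    (h : ∀ x ∈ l, Dominated x s) : lsum l = s :=
  (dominated_lsum h).resolve_right (mod_le_mod_lsum hs).not_gt

theorem exists_split_of_isSigned {ρ : ℕ → SMax Γ} {m n : ℕ} (hmn : m ≤ n)
    (hmono : MonotoneOn (fun k => mod (ρ k)) (Set.Ico m n))
    (hρ : ∀ k, m ≤ k → k < n → isSigned (ρ k)) {y : SMax Γ} (hy : isSigned y)
    (hyρ : ∀ k, m ≤ k → k < n → y ≠ ρ k) :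
    ∃ K, m ≤ K ∧ K ≤ n ∧ (∀ k, m ≤ k → k < K → mod (ρ k) < mod y ∨ y = sneg (ρ k)) ∧
      ∀ k, K ≤ k → k < n → mod y < mod (ρ k) := by
  obtain ⟨K, hmK, hKn, hle, hlt⟩ := exists_threshold_of_monotoneOn hmn hmono (mod y)
  refine ⟨K, hmK, hKn, fun k hmk hkK => ?_, hlt⟩
  exact (hle k hmk hkK).lt_or_eq.imp_right fun h =>
    eq_sneg_of_mod_eq hy (hρ k hmk (by omega)) h.symm (hyρ k hmk (by omega))

end Order

section Mul

variable [AddCommGroup Γ]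

theorem mod_mul (x y : SMax Γ) : mod (mul x y) = mod x + mod y := by
  cases x <;> cases y <;> simp [mul, mod]

theorem mul_one (x : SMax Γ) : mul x one = x := by
  cases x <;> simp [mul, one]

theorem zero_mul (x : SMax Γ) : mul zero x = zero := by
  cases x <;> rfl

theorem mul_comm (x y : SMax Γ) : mul x y = mul y x := by
  cases x <;> cases y <;> simp [mul, _root_.add_comm]

theorem mul_assoc (x y z : SMax Γ) : mul (mul x y) z = mul x (mul y z) := by
  cases x <;> cases y <;> cases z <;> simp [mul, _root_.add_assoc]

theorem sneg_mul (x y : SMax Γ) : mul (sneg x) y = sneg (mul x y) := by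
  cases x <;> cases y <;> rfl

theorem mul_ne_zero {x y : SMax Γ} (hx : x ≠ zero) (hy : y ≠ zero) : mul x y ≠ zero := by
  cases x <;> cases y <;> simp_all [mul]

theorem isSigned_mul {x y : SMax Γ} (hx : isSigned x) (hy : isSigned y) :
    isSigned (mul x y) := by
  cases x <;> cases y <;> simp_all [mul, isSigned]

theorem isSigned_spow {y : SMax Γ} (hy : isSigned y) (k : ℕ) : isSigned (spow y k) := by
  induction k with
  | zero => trivial
  | succ k ih => exact isSigned_mul hy ih

theorem spow_ne_zero {y : SMax Γ} (hy : y ≠ zero) (k : ℕ) : spow y k ≠ zero := by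
  induction k with
  | zero => simp [spow, one]
  | succ k ih => exact mul_ne_zero hy ih

def term (P : ℕ → SMax Γ) (y : SMax Γ) (k : ℕ) : SMax Γ := mul (P k) (spow y k)

theorem term_zero (P : ℕ → SMax Γ) (y : SMax Γ) : term P y 0 = P 0 := mul_one _

theorem mod_add_mod_term_succ {P : ℕ → SMax Γ} {ρ y : SMax Γ} {k : ℕ}
    (hρ : mul ρ (P (k + 1)) = sneg (P k)) :
    mod ρ + mod (term P y (k + 1)) = mod y + mod (term P y k) := by
  have h := congrArg mod hρ
  simp only [mod_mul, mod_sneg] at h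
  simp only [term, spow, mod_mul, ← h]
  abel

theorem term_succ_eq_of_eq_sneg {P : ℕ → SMax Γ} {ρ y : SMax Γ} {k : ℕ}
    (hρ : mul ρ (P (k + 1)) = sneg (P k)) (hy : y = sneg ρ) :
    term P y (k + 1) = term P y k := by
  rw [term, spow, ← mul_assoc, mul_comm (P _), hy, sneg_mul, hρ, sneg_sneg, term]

end Mul

section OrderedGroup

variable [AddCommGroup Γ] [LinearOrder Γ]

theorem phat_eq_of_dominated {P : ℕ → SMax Γ} {n K : ℕ} {y : SMax Γ} (hKn : K ≤ n)
    (h : ∀ k, k ≤ n → Dominated (term P y k) (term P y K)) : phat P n y = term P y K := by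
  refine lsum_eq_of_dominated (List.mem_map.2 ⟨K, List.mem_range.2 (by omega), rfl⟩) ?_
  intro x hx
  obtain ⟨k, hk, rfl⟩ := List.mem_map.1 hx
  exact h k (Nat.lt_succ_iff.1 (List.mem_range.1 hk))

theorem phat_zero (P : ℕ → SMax Γ) (n : ℕ) : phat P n zero = P 0 := by
  rw [phat_eq_of_dominated (Nat.zero_le n), term_zero]
  rintro (_ | k) -
  · exact Dominated.refl _
  · simpa only [term, spow, zero_mul, mul_comm (P _)] using zero_dominated _

variable [IsOrderedAddMonoid Γ]

theorem dominated_of_add_mod_eq {a b : WithBot Γ} {x s : SMax Γ} (h : a + mod x = b + mod s)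
    (hba : b < a) : Dominated x s := by
  have ha : a ≠ ⊥ := hba.ne_bot
  rcases eq_or_ne s zero with rfl | hs
  · left
    rw [← mod_eq_bot_iff]
    simpa [mod, ha] using h
  · right
    rw [← WithBot.add_lt_add_iff_left ha, h]
    exact WithBot.add_lt_add_right (mod_eq_bot_iff.not.2 hs) hba

theorem dominated_term_succ_of_mod_lt {P : ℕ → SMax Γ} {ρ y : SMax Γ} {k : ℕ}
    (hρ : mul ρ (P (k + 1)) = sneg (P k)) (hy : mod y < mod ρ) :
    Dominated (term P y (k + 1)) (term P y k) :=
  dominated_of_add_mod_eq (mod_add_mod_term_succ hρ) hy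

theorem dominated_term_of_mod_lt {P : ℕ → SMax Γ} {ρ y : SMax Γ} {k : ℕ}
    (hρ : mul ρ (P (k + 1)) = sneg (P k)) (hy : mod ρ < mod y) :
    Dominated (term P y k) (term P y (k + 1)) :=
  dominated_of_add_mod_eq (mod_add_mod_term_succ hρ).symm hy

theorem mod_le_mod_of_concave {ρ₀ ρ₁ p₀ p₁ p₂ : SMax Γ}
    (h₀ : mul ρ₀ p₁ = sneg p₀) (h₁ : mul ρ₁ p₂ = sneg p₁) (hp₁ : p₁ ≠ zero) (hp₂ : p₂ ≠ zero)
    (hconc : mod p₂ + mod p₀ ≤ mod p₁ + mod p₁) : mod ρ₀ ≤ mod ρ₁ := by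
  have e₀ := congrArg mod h₀
  have e₁ := congrArg mod h₁
  simp only [mod_mul, mod_sneg] at e₀ e₁
  have hne : mod p₁ + mod p₂ ≠ ⊥ :=
    WithBot.add_ne_bot.2 ⟨mod_eq_bot_iff.not.2 hp₁, mod_eq_bot_iff.not.2 hp₂⟩
  rw [← WithBot.add_le_add_iff_right hne]
  calc mod ρ₀ + (mod p₁ + mod p₂) = mod p₂ + mod p₀ := by rw [← e₀]; abel
    _ ≤ mod p₁ + mod p₁ := hconc
    _ = (mod ρ₁ + mod p₂) + mod p₁ := by rw [e₁]
    _ = mod ρ₁ + (mod p₁ + mod p₂) := by abel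

theorem monotoneOn_mod_root {P ρ : ℕ → SMax Γ} {m n : ℕ}
    (hP : ∀ k, m ≤ k → k ≤ n → P k ≠ zero)
    (hconc : ∀ k, m < k → k < n →
      mod (P (k + 1)) + mod (P (k - 1)) ≤ mod (P k) + mod (P k))
    (hρ : ∀ k, m ≤ k → k < n → mul (ρ k) (P (k + 1)) = sneg (P k)) :
    MonotoneOn (fun k => mod (ρ k)) (Set.Ico m n) := by
  refine monotoneOn_of_le_add_one Set.ordConnected_Ico fun k _ hk hk₁ => ?_
  obtain ⟨hmk, hkn⟩ := hk
  obtain ⟨-, hk₁n⟩ := hk₁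
  exact mod_le_mod_of_concave (hρ k hmk hkn) (hρ (k + 1) (by omega) hk₁n)
    (hP (k + 1) (by omega) (by omega)) (hP (k + 2) (by omega) (by omega))
    (hconc (k + 1) (by omega) hk₁n)

theorem phat_eq_term_of_split {P ρ : ℕ → SMax Γ} {m n K : ℕ} {y : SMax Γ}
    (hP : ∀ k, k < m → P k = zero) (hmK : m ≤ K) (hKn : K ≤ n)
    (hρ : ∀ k, m ≤ k → k < n → mul (ρ k) (P (k + 1)) = sneg (P k))
    (hleft : ∀ k, m ≤ k → k < K → mod (ρ k) < mod y ∨ y = sneg (ρ k))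
    (hright : ∀ k, K ≤ k → k < n → mod y < mod (ρ k)) :
    phat P n y = term P y K := by
  refine phat_eq_of_dominated hKn fun k hkn => ?_
  rcases lt_or_ge k m with hkm | hmk
  · simpa only [term, hP k hkm, zero_mul] using zero_dominated _
  rcases le_total k K with hkK | hKk
  · induction hkK using Nat.decreasingInduction with
    | self => exact Dominated.refl _
    | of_succ k hkK ih =>
        refine Dominated.trans ?_ (ih (by omega) (by omega))
        rcases hleft k hmk hkK with hlt | heq
        · exact dominated_term_of_mod_lt (hρ k hmk (by omega)) hlt
        · exact Or.inl (term_succ_eq_of_eq_sneg (hρ k hmk (by omega)) heq).symm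
  · induction k, hKk using Nat.le_induction with
    | base => exact Dominated.refl _
    | succ k hKk ih =>
        exact (dominated_term_succ_of_mod_lt (hρ k (by omega) (by omega))
          (hright k hKk (by omega))).trans (ih (by omega) (by omega))

end OrderedGroup

end SMax

theorem smax_not_balanced_outside_roots_general {Γ : Type}
    [AddCommGroup Γ] [LinearOrder Γ] [IsOrderedAddMonoid Γ]
    (P : ℕ → SMax Γ) (m n : ℕ) (hmn : m ≤ n)
    (hsigned : ∀ k, SMax.isSigned (P k))
    (hsupp : ∀ k, P k ≠ SMax.zero ↔ m ≤ k ∧ k ≤ n)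
    (hconc : ∀ k, m < k → k < n →
      SMax.mod (P (k + 1)) + SMax.mod (P (k - 1))
        ≤ SMax.mod (P k) + SMax.mod (P k))
    (r : ℕ → SMax Γ)
    (hr1 : ∀ i, 1 ≤ i → i ≤ n - m →
      SMax.isSigned (r i) ∧ SMax.mul (r i) (P (n - i + 1)) = SMax.sneg (P (n - i)))
    (hr2 : ∀ i, n - m < i → i ≤ n → r i = SMax.zero)
    (y : SMax Γ)
    (hy : (SMax.isSigned y ∧ ∀ i, 1 ≤ i → i ≤ n → y ≠ r i) ∨
      SMax.mod y < SMax.mod (r n)) :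
    ¬ SMax.isBalanced (SMax.phat P n y) := by
  have hPne : ∀ k, m ≤ k → k ≤ n → P k ≠ SMax.zero := fun k h₁ h₂ => (hsupp k).2 ⟨h₁, h₂⟩
  have hPz : ∀ k, k < m → P k = SMax.zero := fun k hk => by simpa [hk.not_ge] using hsupp k
  have hρ : ∀ k, m ≤ k → k < n →
      SMax.isSigned (r (n - k)) ∧ SMax.mul (r (n - k)) (P (k + 1)) = SMax.sneg (P k) := by
    intro k hmk hkn
    simpa [show n - (n - k) = k by omega] using hr1 (n - k) (by omega) (by omega)
  have hmono := SMax.monotoneOn_mod_root hPne hconc fun k h₁ h₂ => (hρ k h₁ h₂).2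
  have hrn : 0 < m → r n = SMax.zero := fun hm => hr2 n (by omega) le_rfl
  rcases hy with ⟨hys, hyr⟩ | hlt
  · rcases eq_or_ne y SMax.zero with rfl | hy0
    · obtain rfl : m = 0 := by
        by_contra hm
        exact hyr n (by omega) le_rfl (hrn (by omega)).symm
      rw [SMax.phat_zero]
      exact SMax.not_isBalanced_of_isSigned (hsigned 0) (hPne 0 le_rfl n.zero_le)
    obtain ⟨K, hmK, hKn, hleft, hright⟩ := SMax.exists_split_of_isSigned hmn hmono
      (fun k h₁ h₂ => (hρ k h₁ h₂).1) hys fun k _ hkn => hyr (n - k) (by omega) (by omega)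
    rw [SMax.phat_eq_term_of_split hPz hmK hKn (fun k h₁ h₂ => (hρ k h₁ h₂).2) hleft hright]
    exact SMax.not_isBalanced_of_isSigned
      (SMax.isSigned_mul (hsigned K) (SMax.isSigned_spow hys K))
      (SMax.mul_ne_zero (hPne K hmK hKn) (SMax.spow_ne_zero hy0 K))
  · obtain rfl : m = 0 := by
      by_contra hm
      simp [hrn (by omega), SMax.mod] at hlt
    rw [SMax.phat_eq_term_of_split hPz le_rfl n.zero_le (fun k h₁ h₂ => (hρ k h₁ h₂).2)
      (fun k _ hk => absurd hk k.not_lt_zero)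
      (fun k _ hkn => hlt.trans_le (hmono ⟨le_rfl, by omega⟩ ⟨k.zero_le, hkn⟩ k.zero_le)),
      SMax.term_zero]
    exact SMax.not_isBalanced_of_isSigned (hsigned 0) (hPne 0 le_rfl n.zero_le)

/-- Under the hypotheses of the factorization theorem (signed coefficients,
`|P|` factored, the `r_i` defined by `r_i ⊙ P_{n-i+1} = ⊖ P_{n-i}`): if `y` is
signed and distinct from all the `r_i`, or `|y| < |r_n|`, then `P̂(y)` is not a
balanced element of `S_max`. -/
theorem smax_not_balanced_outside_roots {Γ : Type}
    [AddCommGroup Γ] [LinearOrder Γ] [IsOrderedAddMonoid Γ]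
    (hdiv : ∀ (g : Γ) (k : ℕ), 0 < k → ∃ h : Γ, k • h = g)
    (P : ℕ → SMax Γ) (m n : ℕ) (hmn : m ≤ n)
    (hsigned : ∀ k, SMax.isSigned (P k))
    (hsupp : ∀ k, P k ≠ SMax.zero ↔ m ≤ k ∧ k ≤ n)
    (hconc : ∀ k, m < k → k < n →
      SMax.mod (P (k + 1)) + SMax.mod (P (k - 1))
        ≤ SMax.mod (P k) + SMax.mod (P k))
    (r : ℕ → SMax Γ)
    (hr1 : ∀ i, 1 ≤ i → i ≤ n - m →
      SMax.isSigned (r i) ∧ SMax.mul (r i) (P (n - i + 1)) = SMax.sneg (P (n - i)))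
    (hr2 : ∀ i, n - m < i → i ≤ n → r i = SMax.zero)
    (y : SMax Γ)
    (hy : (SMax.isSigned y ∧ ∀ i, 1 ≤ i → i ≤ n → y ≠ r i) ∨
      SMax.mod y < SMax.mod (r n)) :
    ¬ SMax.isBalanced (SMax.phat P n y) :=
  smax_not_balanced_outside_roots_general P m n hmn hsigned hsupp hconc r hr1 hr2 y hy
end
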